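/- arXiv:1312.7320 — 6 statements merged into one kernel-verified Lean document; each statement's English description precedes it below -/
import Mathlib

section
/- Let $(A, \mathfrak{m})$ be a local ring and $d \colon F \to F'$ a homomorphism of free $A$-modules of finite rank. Then there exist direct sum decompositions $F = V \oplus W$ and $F' = W' \oplus U$ into free submodules such that $d(V) \subseteq \mathfrak{m} F'$ and $d$ restricts to an isomorphism $W \xrightarrow{\approx} W'$. -/
/-!
Reduce modulo `𝔪`. Over the residue field `k`, choose a basis of `k ⊗ F` made of a basis of
`ker (k ⊗ d)` and a basis of a complement, and extend the images of the latter to a basis of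
`k ⊗ F'`. Lift all these vectors to `F` and `F'`. By Nakayama, lifts of a `k`-basis of a finite
flat module form a basis, so the lifted pieces span complementary submodules, which are free as
direct summands of a finite free module over a local ring; `d` is injective on `W` because the
images of its basis vectors reduce to linearly independent vectors.
-/

open TensorProduct IsLocalRing

universe u v

theorem Module.Basis.sumExtend_inl {K V ι : Type*} [DivisionRing K] [AddCommGroup V] [Module K V]
    {v : ι → V} (hs : LinearIndependent K v) (i : ι) : sumExtend hs (.inl i) = v i := by
  simp only [sumExtend, reindex_apply, coe_extend]
  rfl

theorem LinearMap.exists_basis_sum_ker_basis_sum {k : Type*} {E : Type u} {E' : Type v} [Field k]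
    [AddCommGroup E] [Module k E] [AddCommGroup E'] [Module k E'] (φ : E →ₗ[k] E') :
    ∃ (ι κ : Type u) (μ : Type v) (b : Module.Basis (ι ⊕ κ) k E)
      (b' : Module.Basis (κ ⊕ μ) k E'),
      (∀ i, φ (b (.inl i)) = 0) ∧ ∀ j, φ (b (.inr j)) = b' (.inl j) := by
  obtain ⟨C, hC⟩ := (ker φ).exists_isCompl
  let bK := Module.Basis.ofVectorSpace k (ker φ)
  let bC := Module.Basis.ofVectorSpace k C
  have hli : LinearIndependent k (φ ∘ C.subtype ∘ bC) := by
    refine (bC.linearIndependent.map' _ C.ker_subtype).map ?_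
    exact hC.symm.disjoint.mono_left
      (Submodule.span_le.2 (Set.range_subset_iff.2 fun j => (bC j).2))
  refine ⟨_, _, _, (bK.prod bC).map (Submodule.prodEquivOfIsCompl _ _ hC), .sumExtend hli,
    fun i => by simp, fun j => ?_⟩
  rw [Module.Basis.sumExtend_inl]
  simp

theorem Submodule.free_of_isCompl {A M : Type*} [CommRing A] [IsLocalRing A] [AddCommGroup M]
    [Module A M] [Module.Projective A M] [Module.Finite A M] {V W : Submodule A M}
    (h : IsCompl V W) : Module.Free A V := by
  have : Module.Projective A V :=
    .of_split V.subtype (V.projectionOnto W h) (V.projectionOnto_comp_subtype h)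
  have : Module.Finite A V := .of_surjective _ (V.projectionOnto_surjective h)
  exact Module.free_of_flat_of_isLocalRing

section Lift

variable {A M : Type*} [CommRing A] [IsLocalRing A] [AddCommGroup M] [Module A M]
  [Module.Flat A M]

theorem IsLocalRing.linearIndependent_of_tmul_eq {ι : Type*} {f : ι → M}
    {v : ι → ResidueField A ⊗[A] M} (hv : LinearIndependent (ResidueField A) v)
    (hf : ∀ i, 1 ⊗ₜ f i = v i) : LinearIndependent A f :=
  Module.IsLocalRing.linearIndependent_of_flat f (by convert hv; exact funext hf)

theorem IsLocalRing.isCompl_span_of_tmul_eq_basis [Module.Finite A M] {ι κ : Type*}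
    {f : ι ⊕ κ → M} {b : Module.Basis (ι ⊕ κ) (ResidueField A) (ResidueField A ⊗[A] M)}
    (hf : ∀ i, 1 ⊗ₜ f i = b i) :
    IsCompl (Submodule.span A (Set.range (f ∘ .inl)))
      (Submodule.span A (Set.range (f ∘ .inr))) := by
  rw [Set.range_comp, Set.range_comp]
  exact (linearIndependent_of_tmul_eq b.linearIndependent hf).isCompl_span_image
    (span_eq_top_of_tmul_eq_basis f b hf) Set.isCompl_range_inl_range_inr

end Lift

theorem stmt2 {A : Type*} [CommRing A] [IsLocalRing A]
    {F : Type*} [AddCommGroup F] [Module A F] [Module.Free A F] [Module.Finite A F]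
    {F' : Type*} [AddCommGroup F'] [Module A F'] [Module.Free A F'] [Module.Finite A F']
    (d : F →ₗ[A] F') :
    ∃ (V W : Submodule A F) (W' U : Submodule A F'),
      IsCompl V W ∧ IsCompl W' U ∧
      Module.Free A V ∧ Module.Free A W ∧ Module.Free A W' ∧ Module.Free A U ∧
      V.map d ≤ (maximalIdeal A) • (⊤ : Submodule A F') ∧
      W.map d = W' ∧ Disjoint W (LinearMap.ker d) := by
  set k := ResidueField A
  obtain ⟨ι, κ, μ, b, b', hker, hcoker⟩ := (d.baseChange k).exists_basis_sum_ker_basis_sum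
  choose s hs using TensorProduct.mk_surjective A F k Ideal.Quotient.mk_surjective
  choose s' hs' using TensorProduct.mk_surjective A F' k Ideal.Quotient.mk_surjective
  have hd : ∀ x, (1 : k) ⊗ₜ[A] d x = d.baseChange k (1 ⊗ₜ x) := fun x => rfl
  have hdw : ∀ j, (1 : k) ⊗ₜ[A] d (s (b (.inr j))) = b' (.inl j) := by
    intro j
    rw [hd, ← hcoker j]
    exact congrArg _ (hs _)
  have hVW := isCompl_span_of_tmul_eq_basis (f := s ∘ b) (fun i => hs _)
  have hWU :=
    isCompl_span_of_tmul_eq_basis (f := Sum.elim (d ∘ s ∘ b ∘ .inr) (s' ∘ b' ∘ .inr)) (b := b')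
      (by rintro (j | j); exacts [hdw j, hs' _])
  refine ⟨_, _, _, _, hVW, hWU, Submodule.free_of_isCompl hVW, Submodule.free_of_isCompl hVW.symm,
    Submodule.free_of_isCompl hWU, Submodule.free_of_isCompl hWU.symm, ?_, ?_, ?_⟩
  · rw [Submodule.map_span, Submodule.span_le, ← Set.range_comp, Set.range_subset_iff]
    intro i
    rw [← LinearMap.ker_tensorProductMk, SetLike.mem_coe, LinearMap.mem_ker]
    show (1 : k) ⊗ₜ[A] d (s (b (.inl i))) = 0
    rw [hd, ← hker i]
    exact congrArg _ (hs _)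
  · rw [Submodule.map_span, ← Set.range_comp]; rfl
  · exact Submodule.range_ker_disjoint
      (linearIndependent_of_tmul_eq (b'.linearIndependent.comp _ Sum.inl_injective) hdw)
end

section
/- Let $(A, \mathfrak{m}, k)$ be a noetherian local ring and let $(F^\bullet, d^\bullet)$ be a cochain complex of free $A$-modules of finite rank. If the base change map $\varphi^p \colon H^p(F^\bullet) \otimes_A k \to H^p(F^\bullet \otimes_A k)$ is surjective, then it is an isomorphism. -/
/-!
Surjectivity of the base change map lets every `x ∈ F¹` with `d¹x ∈ 𝔪F²` be corrected modulo
`𝔪F¹` into a cocycle, so `B = im d¹` satisfies `B ∩ 𝔪F² = 𝔪B`: the map `k ⊗ B → k ⊗ F²` is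
injective. Over a local ring this makes `B` a direct summand of the finite free `F²`, hence
projective, so `Z = ker d¹` is a direct summand of `F¹` and `k ⊗ Z → k ⊗ F¹` stays injective.
Since `k ⊗ H = coker (k ⊗ F⁰ → k ⊗ Z)` by right exactness, it then embeds into `H(F ⊗ k)`.
-/

open TensorProduct IsLocalRing

open TensorProduct

section Defs

variable (A : Type*) [CommRing A] (k : Type*) [CommRing k] [Algebra A k]
variable {M0 M1 M2 : Type*} [AddCommGroup M0] [AddCommGroup M1] [AddCommGroup M2]
  [Module A M0] [Module A M1] [Module A M2]

/-- Cohomology of `M0 → M1 → M2` at the middle spot. -/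
abbrev coh (d0 : M0 →ₗ[A] M1) (d1 : M1 →ₗ[A] M2) : Type _ :=
  LinearMap.ker d1 ⧸ (LinearMap.range d0).comap (LinearMap.ker d1).subtype

variable (d0 : M0 →ₗ[A] M1) (d1 : M1 →ₗ[A] M2)

/-- The map on kernels induced by `x ↦ 1 ⊗ x`. -/
noncomputable def kerBaseChange : LinearMap.ker d1 →ₗ[A] LinearMap.ker (d1.baseChange k) :=
  LinearMap.codRestrict ((LinearMap.ker (d1.baseChange k)).restrictScalars A)
    (((TensorProduct.mk A k M1) 1).comp (LinearMap.ker d1).subtype)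
    (fun x => by
      simp [LinearMap.mem_ker, (LinearMap.mem_ker.mp x.2)])

/-- The natural base change map `k ⊗ H(F) → H(F ⊗ k)` on cohomology. -/
noncomputable def cohBaseChange :
    k ⊗[A] coh A d0 d1 →ₗ[k] coh k (d0.baseChange k) (d1.baseChange k) :=
  LinearMap.liftBaseChange k <|
    Submodule.liftQ _
      (((Submodule.mkQ _).restrictScalars A).comp (kerBaseChange A k d1))
      (by
        rintro ⟨x, hx⟩ ⟨y, rfl⟩
        have : kerBaseChange A k d1 ⟨d0 y, hx⟩ ∈
            (LinearMap.range (d0.baseChange k)).comap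
              (LinearMap.ker (d1.baseChange k)).subtype := by
          refine ⟨1 ⊗ₜ y, ?_⟩
          rfl
        simpa [LinearMap.mem_ker, Submodule.Quotient.mk_eq_zero] using this)

end Defs

section BaseChange

variable {A k : Type*} [CommRing A] [CommRing k] [Algebra A k]
  {M0 M1 M2 : Type*} [AddCommGroup M0] [AddCommGroup M1] [AddCommGroup M2]
  [Module A M0] [Module A M1] [Module A M2] {d0 : M0 →ₗ[A] M1} {d1 : M1 →ₗ[A] M2}

theorem cohBaseChange_one_tmul_mk (z : LinearMap.ker d1) :
    cohBaseChange A k d0 d1 ((1 : k) ⊗ₜ[A] Submodule.Quotient.mk z) =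
      Submodule.Quotient.mk (kerBaseChange A k d1 z) := by
  simp [cohBaseChange]

theorem exists_mem_ker_one_tmul_eq_of_surjective_cohBaseChange
    (hk : Function.Surjective (algebraMap A k)) (hc : d1 ∘ₗ d0 = 0)
    (hsurj : Function.Surjective (cohBaseChange A k d0 d1)) (x : M1)
    (hx : (1 : k) ⊗ₜ[A] d1 x = 0) :
    ∃ z ∈ LinearMap.ker d1, (1 : k) ⊗ₜ[A] z = (1 : k) ⊗ₜ[A] x := by
  obtain ⟨y, hy⟩ := hsurj (Submodule.Quotient.mk ⟨(1 : k) ⊗ₜ[A] x, by simpa using hx⟩)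
  obtain ⟨h, rfl⟩ := TensorProduct.mk_surjective A _ k hk y
  obtain ⟨z, rfl⟩ := Submodule.Quotient.mk_surjective _ h
  rw [TensorProduct.mk_apply, cohBaseChange_one_tmul_mk, Submodule.Quotient.eq] at hy
  obtain ⟨w, hw⟩ := hy
  obtain ⟨y, rfl⟩ := TensorProduct.mk_surjective A M0 k hk w
  refine ⟨z - d0 y, sub_mem z.2 (LinearMap.congr_fun hc y), ?_⟩
  have hw' : (1 : k) ⊗ₜ[A] d0 y = (1 : k) ⊗ₜ[A] (z : M1) - (1 : k) ⊗ₜ[A] x := hw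
  rw [TensorProduct.tmul_sub, hw', sub_sub_cancel]

theorem injective_lTensor_range_subtype_of_surjective_cohBaseChange
    (hk : Function.Surjective (algebraMap A k)) (hc : d1 ∘ₗ d0 = 0)
    (hsurj : Function.Surjective (cohBaseChange A k d0 d1)) :
    Function.Injective ((LinearMap.range d1).subtype.lTensor k) := by
  rw [injective_iff_map_eq_zero]
  intro w hw
  obtain ⟨⟨_, x, rfl⟩, rfl⟩ := TensorProduct.mk_surjective A _ k hk w
  obtain ⟨z, hz, hzx⟩ :=
    exists_mem_ker_one_tmul_eq_of_surjective_cohBaseChange hk hc hsurj x (by simpa using hw)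
  calc (1 : k) ⊗ₜ[A] d1.rangeRestrict x
      = d1.rangeRestrict.lTensor k ((1 : k) ⊗ₜ[A] x) := rfl
    _ = d1.rangeRestrict.lTensor k ((1 : k) ⊗ₜ[A] z) := by rw [hzx]
    _ = 0 := by
      rw [LinearMap.lTensor_tmul, show d1.rangeRestrict z = 0 from Subtype.ext hz,
        TensorProduct.tmul_zero]

theorem injective_cohBaseChange_of_injective_lTensor_ker_subtype
    (hk : Function.Surjective (algebraMap A k)) (hc : d1 ∘ₗ d0 = 0)
    (hinj : Function.Injective ((LinearMap.ker d1).subtype.lTensor k)) :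
    Function.Injective (cohBaseChange A k d0 d1) := by
  rw [injective_iff_map_eq_zero]
  intro c hc0
  obtain ⟨h, rfl⟩ := TensorProduct.mk_surjective A _ k hk c
  obtain ⟨z, rfl⟩ := Submodule.Quotient.mk_surjective _ h
  rw [TensorProduct.mk_apply, cohBaseChange_one_tmul_mk, Submodule.Quotient.mk_eq_zero] at hc0
  obtain ⟨w, hw⟩ := hc0
  obtain ⟨y, rfl⟩ := TensorProduct.mk_surjective A M0 k hk w
  let b : LinearMap.ker d1 := ⟨d0 y, LinearMap.congr_fun hc y⟩
  have hzb : (1 : k) ⊗ₜ[A] z = (1 : k) ⊗ₜ[A] b := hinj hw.symm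
  have hb : (Submodule.Quotient.mk b : coh A d0 d1) = 0 :=
    (Submodule.Quotient.mk_eq_zero _).mpr ⟨y, rfl⟩
  calc (1 : k) ⊗ₜ[A] Submodule.Quotient.mk z
      = (Submodule.mkQ _).lTensor k ((1 : k) ⊗ₜ[A] z) := rfl
    _ = 0 := by rw [hzb, LinearMap.lTensor_tmul, Submodule.mkQ_apply, hb, TensorProduct.tmul_zero]

end BaseChange

theorem exists_leftInverse_ker_subtype_of_projective_range {R M N : Type*} [Ring R]
    [AddCommGroup M] [Module R M] [AddCommGroup N] [Module R N] (f : M →ₗ[R] N)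
    [Module.Projective R (LinearMap.range f)] :
    ∃ r : M →ₗ[R] LinearMap.ker f, r ∘ₗ (LinearMap.ker f).subtype = LinearMap.id := by
  have hexact : Function.Exact (LinearMap.ker f).subtype f.rangeRestrict := by
    rw [LinearMap.exact_iff, LinearMap.ker_rangeRestrict, Submodule.range_subtype]
  exact ((hexact.split_tfae Subtype.val_injective f.surjective_rangeRestrict).out 0 1).mp
    (Module.projective_lifting_property _ _ f.surjective_rangeRestrict)

theorem IsLocalRing.projective_of_injective_lTensor_subtype {R N : Type*} [CommRing R]
    [IsLocalRing R] [AddCommGroup N] [Module R N] [Module.Finite R N] [Module.Free R N]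
    (P : Submodule R N) [Module.Finite R P]
    (hP : Function.Injective (P.subtype.lTensor (ResidueField R))) :
    Module.Projective R P := by
  obtain ⟨s, hs⟩ :=
    (IsLocalRing.split_injective_iff_lTensor_residueField_injective P.subtype).mpr hP
  exact .of_split P.subtype s hs

theorem stmt4_general {A : Type*} [CommRing A] [IsLocalRing A]
    {F0 : Type*} [AddCommGroup F0] [Module A F0]
    {F1 : Type*} [AddCommGroup F1] [Module A F1] [Module.Finite A F1]
    {F2 : Type*} [AddCommGroup F2] [Module A F2] [Module.Free A F2] [Module.Finite A F2]
    (d0 : F0 →ₗ[A] F1) (d1 : F1 →ₗ[A] F2) (hc : d1 ∘ₗ d0 = 0)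
    (hsurj : Function.Surjective (cohBaseChange A (ResidueField A) d0 d1)) :
    Function.Bijective (cohBaseChange A (ResidueField A) d0 d1) := by
  have hk : Function.Surjective (algebraMap A (ResidueField A)) := residue_surjective
  have := IsLocalRing.projective_of_injective_lTensor_subtype (LinearMap.range d1)
    (injective_lTensor_range_subtype_of_surjective_cohBaseChange hk hc hsurj)
  obtain ⟨r, hr⟩ := exists_leftInverse_ker_subtype_of_projective_range d1
  have hZ : Function.Injective ((LinearMap.ker d1).subtype.lTensor (ResidueField A)) :=
    Function.HasLeftInverse.injective ⟨r.lTensor _, fun x => by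
      rw [← LinearMap.lTensor_comp_apply, hr, LinearMap.lTensor_id, LinearMap.id_apply]⟩
  exact ⟨injective_cohBaseChange_of_injective_lTensor_ker_subtype hk hc hZ, hsurj⟩

theorem stmt4 {A : Type*} [CommRing A] [IsLocalRing A] [IsNoetherianRing A]
    {F0 : Type*} [AddCommGroup F0] [Module A F0] [Module.Free A F0] [Module.Finite A F0]
    {F1 : Type*} [AddCommGroup F1] [Module A F1] [Module.Free A F1] [Module.Finite A F1]
    {F2 : Type*} [AddCommGroup F2] [Module A F2] [Module.Free A F2] [Module.Finite A F2]
    (d0 : F0 →ₗ[A] F1) (d1 : F1 →ₗ[A] F2) (hc : d1 ∘ₗ d0 = 0)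
    (hsurj : Function.Surjective (cohBaseChange A (ResidueField A) d0 d1)) :
    Function.Bijective (cohBaseChange A (ResidueField A) d0 d1) :=
  stmt4_general d0 d1 hc hsurj
end

section
/- Let $(A, \mathfrak{m}, k)$ be a noetherian local ring and $(F^\bullet, d^\bullet)$ a cochain complex of free $A$-modules of finite rank. The base change map $\varphi^p \colon H^p(F^\bullet) \otimes_A k \to H^p(F^\bullet \otimes_A k)$ is surjective if and only if $\ker d^p$ is a direct summand of $F^p$ and $\operatorname{im} d^p$ is a direct summand of $F^{p+1}$. -/
open TensorProduct IsLocalRing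

open TensorProduct

/-!
Surjectivity of the base change map at `F¹` says exactly that `k ⊗ ker d¹ → k ⊗ F¹ → k ⊗ F²`
is exact. Tensoring `0 → ker d¹ → F¹ → im d¹ → 0` with `k` is right exact, so this holds iff
`k ⊗ im d¹ → k ⊗ F²` is injective, which over a local ring (with `im d¹` finite and `F²` finite
free) means that `im d¹ ↪ F²` splits. Then `im d¹` is projective, so `F¹ ↠ im d¹` splits too and
`ker d¹` is a direct summand of `F¹`.
-/

open Function LinearMap

section Ring

variable {R M N P P' : Type*} [Ring R] [AddCommGroup M] [AddCommGroup N] [AddCommGroup P]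
  [AddCommGroup P'] [Module R M] [Module R N] [Module R P] [Module R P']

theorem Submodule.exists_isCompl_iff_exists_retraction (p : Submodule R M) :
    (∃ q : Submodule R M, IsCompl p q) ↔ ∃ f : M →ₗ[R] p, f ∘ₗ p.subtype = LinearMap.id :=
  ⟨fun ⟨q, hq⟩ => ⟨p.projectionOnto q hq, p.projectionOnto_comp_subtype hq⟩,
    fun ⟨f, hf⟩ => ⟨ker f, isCompl_of_proj (LinearMap.congr_fun hf)⟩⟩

theorem Function.Exact.exact_comp_iff_injective {f : M →ₗ[R] N} {g : N →ₗ[R] P}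
    (hfg : Exact f g) (hg : Surjective g) (h : P →ₗ[R] P') :
    Exact f (h ∘ₗ g) ↔ Injective h := by
  refine ⟨fun hfhg => (injective_iff_map_eq_zero h).mpr fun y hy => ?_,
    fun hh => hfg.comp_injective h hh (map_zero h)⟩
  obtain ⟨x, rfl⟩ := hg y
  obtain ⟨z, rfl⟩ := (hfhg x).mp hy
  exact hfg.apply_apply_eq_zero z

theorem LinearMap.exact_subtype_ker_rangeRestrict (g : N →ₗ[R] P) :
    Exact (ker g).subtype g.rangeRestrict := by
  rw [exact_iff, ker_rangeRestrict, Submodule.range_subtype]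

theorem LinearMap.exact_ker_subtype_comp_iff_surjective (g : N →ₗ[R] P) (j : M →ₗ[R] ker g) :
    Exact ((ker g).subtype ∘ₗ j) g ↔ Surjective j := by
  rw [exact_iff, range_comp, ← range_eq_top]
  nth_rw 1 [← Submodule.map_subtype_top (ker g)]
  rw [(Submodule.map_injective_of_injective (ker g).injective_subtype).eq_iff, eq_comm]

theorem LinearMap.exists_isCompl_ker_of_isCompl_range [Module.Projective R N] (f : M →ₗ[R] N)
    (h : ∃ U : Submodule R N, IsCompl (range f) U) :
    ∃ W : Submodule R M, IsCompl (ker f) W := by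
  rw [Submodule.exists_isCompl_iff_exists_retraction] at h ⊢
  obtain ⟨r, hr⟩ := h
  have : Module.Projective R (range f) := .of_split _ _ hr
  exact ((exact_subtype_ker_rangeRestrict f).split_tfae (ker f).injective_subtype
    f.surjective_rangeRestrict).out 0 1 |>.mp
    (Module.projective_lifting_property _ _ f.surjective_rangeRestrict)

end Ring

theorem LinearMap.exact_lTensor_ker_subtype_iff {R M N : Type*} [CommRing R] [AddCommGroup M]
    [AddCommGroup N] [Module R M] [Module R N] (Q : Type*) [AddCommGroup Q] [Module R Q]
    (f : M →ₗ[R] N) :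
    Exact ((ker f).subtype.lTensor Q) (f.lTensor Q) ↔
      Injective ((range f).subtype.lTensor Q) := by
  have hf : f.lTensor Q = (range f).subtype.lTensor Q ∘ₗ f.rangeRestrict.lTensor Q := by
    rw [← lTensor_comp]; rfl
  rw [hf]
  exact (lTensor_exact Q (exact_subtype_ker_rangeRestrict f) f.surjective_rangeRestrict)
    |>.exact_comp_iff_injective (lTensor_surjective Q f.surjective_rangeRestrict) _

section BaseChange

variable {A : Type*} [CommRing A] {k : Type*} [CommRing k] [Algebra A k]
  {M0 M1 M2 : Type*} [AddCommGroup M0] [AddCommGroup M1] [AddCommGroup M2]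
  [Module A M0] [Module A M1] [Module A M2] (d0 : M0 →ₗ[A] M1) (d1 : M1 →ₗ[A] M2)

theorem ker_subtype_comp_liftBaseChange_kerBaseChange :
    (ker (d1.baseChange k)).subtype ∘ₗ (kerBaseChange A k d1).liftBaseChange k =
      (ker d1).subtype.baseChange k := by
  ext x
  exact congrArg Subtype.val (one_smul k (kerBaseChange A k d1 x))

theorem cohBaseChange_comp_baseChange_mkQ :
    cohBaseChange A k d0 d1 ∘ₗ
        (Submodule.mkQ (M := ker d1) ((range d0).comap (ker d1).subtype)).baseChange k =
      Submodule.mkQ (M := ker (d1.baseChange k))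
          ((range (d0.baseChange k)).comap (ker (d1.baseChange k)).subtype) ∘ₗ
        (kerBaseChange A k d1).liftBaseChange k := by
  ext x
  simp [cohBaseChange]

theorem surjective_cohBaseChange_iff_exact (hc : d1 ∘ₗ d0 = 0) :
    Surjective (cohBaseChange A k d0 d1) ↔
      Exact ((ker d1).subtype.baseChange k) (d1.baseChange k) := by
  set j := (kerBaseChange A k d1).liftBaseChange k
  have boundaries_le_range : (range (d0.baseChange k)).comap (ker (d1.baseChange k)).subtype ≤
      range j := by
    rintro x ⟨y, hy⟩
    have hd0 : ∀ z, d0 z ∈ ker d1 := fun z => LinearMap.congr_fun hc z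
    refine ⟨(d0.codRestrict (ker d1) hd0).baseChange k y, Subtype.ext ?_⟩
    refine (LinearMap.congr_fun (ker_subtype_comp_liftBaseChange_kerBaseChange d1) _).trans ?_
    rwa [← LinearMap.comp_apply, ← baseChange_comp]
  have hmkQ : Surjective ((Submodule.mkQ (M := ker d1)
      ((range d0).comap (ker d1).subtype)).baseChange k) :=
    lTensor_surjective k (Submodule.mkQ_surjective _)
  rw [← ker_subtype_comp_liftBaseChange_kerBaseChange, exact_ker_subtype_comp_iff_surjective,
    ← hmkQ.of_comp_iff, ← coe_comp, cohBaseChange_comp_baseChange_mkQ, ← range_eq_top,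
    ← range_eq_top, range_comp]
  exact (Submodule.map_mkQ_eq_top _ _).trans (by rw [sup_eq_right.mpr boundaries_le_range])

end BaseChange

theorem stmt5_general {A : Type*} [CommRing A] [IsLocalRing A]
    {F0 : Type*} [AddCommGroup F0] [Module A F0]
    {F1 : Type*} [AddCommGroup F1] [Module A F1] [Module.Finite A F1]
    {F2 : Type*} [AddCommGroup F2] [Module A F2] [Module.Free A F2] [Module.Finite A F2]
    (d0 : F0 →ₗ[A] F1) (d1 : F1 →ₗ[A] F2) (hc : d1 ∘ₗ d0 = 0) :
    Function.Surjective (cohBaseChange A (ResidueField A) d0 d1) ↔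
      (∃ W : Submodule A F1, IsCompl (LinearMap.ker d1) W) ∧
      (∃ U : Submodule A F2, IsCompl (LinearMap.range d1) U) := by
  rw [surjective_cohBaseChange_iff_exact d0 d1 hc, baseChange_eq_ltensor, baseChange_eq_ltensor,
    exact_lTensor_ker_subtype_iff,
    ← IsLocalRing.split_injective_iff_lTensor_residueField_injective,
    ← Submodule.exists_isCompl_iff_exists_retraction]
  exact ⟨fun h => ⟨d1.exists_isCompl_ker_of_isCompl_range h, h⟩, And.right⟩

theorem stmt5 {A : Type*} [CommRing A] [IsLocalRing A] [IsNoetherianRing A]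
    {F0 : Type*} [AddCommGroup F0] [Module A F0] [Module.Free A F0] [Module.Finite A F0]
    {F1 : Type*} [AddCommGroup F1] [Module A F1] [Module.Free A F1] [Module.Finite A F1]
    {F2 : Type*} [AddCommGroup F2] [Module A F2] [Module.Free A F2] [Module.Finite A F2]
    (d0 : F0 →ₗ[A] F1) (d1 : F1 →ₗ[A] F2) (hc : d1 ∘ₗ d0 = 0) :
    Function.Surjective (cohBaseChange A (ResidueField A) d0 d1) ↔
      (∃ W : Submodule A F1, IsCompl (LinearMap.ker d1) W) ∧
      (∃ U : Submodule A F2, IsCompl (LinearMap.range d1) U) :=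
  stmt5_general d0 d1 hc
end

section
/- Let $(A, \mathfrak{m}, k)$ be a noetherian local ring and $(F^\bullet, d^\bullet)$ a cochain complex of free $A$-modules of finite rank. Suppose the base change map $\varphi^p \colon H^p(F^\bullet) \otimes_A k \to H^p(F^\bullet \otimes_A k)$ is surjective. Then $\varphi^{p-1}$ is surjective if and only if $H^p(F^\bullet)$ is a free $A$-module. -/
open TensorProduct IsLocalRing

open TensorProduct

/-!
By right exactness of `k ⊗ -`, the image of `k ⊗ Z^p` in `k ⊗ F^p` is the kernel of
`k ⊗ F^p → k ⊗ B^{p+1}` (with `Z = ker d`, `B = im d`), so `φ^p` is surjective iff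
`k ⊗ B^{p+1} → k ⊗ F^{p+1}` is injective. Over a local ring, for `F` finite free this
injectivity says exactly that `F / B` is free, or equivalently that `B` is a direct summand.
Hence `φ^{p-1}` is surjective iff `F^p / B^p` is free, and surjectivity of `φ^p` makes
`B^{p+1}` projective, so that `0 → H^p → F^p / B^p → B^{p+1} → 0` splits. As finite projective
modules over a local ring are free, `F^p / B^p` is free iff `H^p` is.
-/

namespace Submodule

variable {R M N : Type*} [Ring R] [AddCommGroup M] [Module R M] [AddCommGroup N] [Module R N]

theorem mkQ_comp_codRestrict_surjective_iff (K B : Submodule R M) (f : N →ₗ[R] M)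
    (hf : ∀ n, f n ∈ K) (hB : B ≤ LinearMap.range f) :
    Function.Surjective ((B.comap K.subtype).mkQ ∘ₗ LinearMap.codRestrict K f hf) ↔
      K ≤ LinearMap.range f := by
  constructor
  · intro hs x hx
    obtain ⟨n, hn⟩ := hs (Quotient.mk ⟨x, hx⟩)
    have hdiff : f n - x ∈ B := by
      simpa [Quotient.eq] using hn
    simpa using sub_mem (LinearMap.mem_range_self f n) (hB hdiff)
  · rintro hK q
    obtain ⟨⟨x, hx⟩, rfl⟩ := mkQ_surjective _ q
    obtain ⟨n, rfl⟩ := hK hx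
    exact ⟨n, rfl⟩

end Submodule

namespace Function.Exact

variable {R M N P Q : Type*} [Ring R] [AddCommGroup M] [Module R M] [AddCommGroup N] [Module R N]
  [AddCommGroup P] [Module R P] [AddCommGroup Q] [Module R Q]

theorem ker_comp_le_range_iff_injective {i : M →ₗ[R] N} {e : N →ₗ[R] P} (h : Exact i e)
    (he : Surjective e) (ι : P →ₗ[R] Q) :
    LinearMap.ker (ι ∘ₗ e) ≤ LinearMap.range i ↔ Injective ι := by
  rw [← h.linearMap_ker_eq]
  refine ⟨fun hle => (injective_iff_map_eq_zero ι).mpr fun p hp => ?_, fun hι => ?_⟩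
  · obtain ⟨n, rfl⟩ := he p
    exact hle hp
  · rw [LinearMap.ker_comp_of_ker_eq_bot _ (LinearMap.ker_eq_bot.mpr hι)]

end Function.Exact

section BaseChange

variable {A : Type*} [CommRing A] (k : Type*) [CommRing k] [Algebra A k]
  {M0 M1 M2 : Type*} [AddCommGroup M0] [AddCommGroup M1] [AddCommGroup M2]
  [Module A M0] [Module A M1] [Module A M2] (d0 : M0 →ₗ[A] M1) (d1 : M1 →ₗ[A] M2)

theorem baseChange_ker_subtype_mem_ker (w : k ⊗[A] LinearMap.ker d1) :
    (LinearMap.ker d1).subtype.baseChange k w ∈ LinearMap.ker (d1.baseChange k) := by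
  rw [LinearMap.mem_ker, ← LinearMap.comp_apply, ← LinearMap.baseChange_comp,
    LinearMap.comp_ker_subtype, LinearMap.baseChange_zero, LinearMap.zero_apply]

theorem cohBaseChange_comp_baseChange_mkQ_s7 :
    cohBaseChange A k d0 d1 ∘ₗ (Submodule.mkQ _).baseChange k =
      Submodule.mkQ _ ∘ₗ LinearMap.codRestrict _ _ (baseChange_ker_subtype_mem_ker k d1) := by
  ext z
  simp only [cohBaseChange, AlgebraTensorModule.curry_apply, curry_apply,
    LinearMap.restrictScalars_comp, LinearMap.coe_comp, LinearMap.coe_restrictScalars,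
    Function.comp_apply, LinearMap.baseChange_tmul, Submodule.mkQ_apply,
    LinearMap.liftBaseChange_tmul, Submodule.liftQ_apply, one_smul]
  rfl

theorem cohBaseChange_surjective_iff_lTensor_range_injective (hc : d1 ∘ₗ d0 = 0) :
    Function.Surjective (cohBaseChange A k d0 d1) ↔
      Function.Injective ((LinearMap.range d1).subtype.lTensor k) := by
  set Z := LinearMap.ker d1
  have hmkQ : Function.Surjective ((Submodule.mkQ (d0.range.comap Z.subtype)).baseChange k) := by
    rw [LinearMap.baseChange_eq_ltensor]
    exact LinearMap.lTensor_surjective k (Submodule.mkQ_surjective _)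
  have hd0 : d0 = Z.subtype ∘ₗ
      LinearMap.codRestrict Z d0 (fun x => LinearMap.range_le_ker_iff.mpr hc ⟨x, rfl⟩) :=
    rfl
  have hB : LinearMap.range (d0.baseChange k) ≤ LinearMap.range (Z.subtype.baseChange k) := by
    rw [hd0, LinearMap.baseChange_comp]
    exact LinearMap.range_comp_le_range _ _
  have hd1 : d1.baseChange k =
      (LinearMap.range d1).subtype.baseChange k ∘ₗ d1.rangeRestrict.baseChange k := by
    rw [← LinearMap.baseChange_comp]
    rfl
  have hexact : Function.Exact (Z.subtype.baseChange k) (d1.rangeRestrict.baseChange k) := by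
    rw [LinearMap.baseChange_eq_ltensor, LinearMap.baseChange_eq_ltensor]
    refine lTensor_exact k ?_ d1.surjective_rangeRestrict
    rw [LinearMap.exact_iff, LinearMap.ker_rangeRestrict, Submodule.range_subtype]
  have hsurj : Function.Surjective (d1.rangeRestrict.baseChange k) := by
    rw [LinearMap.baseChange_eq_ltensor]
    exact LinearMap.lTensor_surjective k d1.surjective_rangeRestrict
  rw [← Function.Surjective.of_comp_iff _ hmkQ, ← LinearMap.coe_comp,
    cohBaseChange_comp_baseChange_mkQ_s7, Submodule.mkQ_comp_codRestrict_surjective_iff _ _ _ _ hB,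
    hd1, hexact.ker_comp_le_range_iff_injective hsurj, LinearMap.baseChange_eq_ltensor]

end BaseChange

section Cohomology

variable {A : Type*} [CommRing A] {M1 M2 M3 : Type*} [AddCommGroup M1] [AddCommGroup M2]
  [AddCommGroup M3] [Module A M1] [Module A M2] [Module A M3] (d1 : M1 →ₗ[A] M2) (d2 : M2 →ₗ[A] M3)

noncomputable def cohToCoker : coh A d1 d2 →ₗ[A] M2 ⧸ LinearMap.range d1 :=
  Submodule.mapQ _ _ (LinearMap.ker d2).subtype le_rfl

noncomputable def cokerToRange (hc : d2 ∘ₗ d1 = 0) :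
    M2 ⧸ LinearMap.range d1 →ₗ[A] LinearMap.range d2 :=
  (LinearMap.range d1).liftQ d2.rangeRestrict
    (by rw [LinearMap.ker_rangeRestrict]; exact LinearMap.range_le_ker_iff.mpr hc)

theorem cohToCoker_injective : Function.Injective (cohToCoker d1 d2) := by
  rw [← LinearMap.ker_eq_bot, cohToCoker, Submodule.ker_mapQ, Submodule.mkQ_map_self]

theorem cokerToRange_surjective (hc : d2 ∘ₗ d1 = 0) :
    Function.Surjective (cokerToRange d1 d2 hc) := by
  rw [← LinearMap.range_eq_top, cokerToRange, Submodule.range_liftQ, LinearMap.range_rangeRestrict]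

theorem exact_cohToCoker_cokerToRange (hc : d2 ∘ₗ d1 = 0) :
    Function.Exact (cohToCoker d1 d2) (cokerToRange d1 d2 hc) := by
  rw [LinearMap.exact_iff, cohToCoker, cokerToRange, Submodule.ker_liftQ, Submodule.range_mapQ,
    LinearMap.ker_rangeRestrict, Submodule.range_subtype]

end Cohomology

section LocalRing

variable {A : Type*} [CommRing A] [IsLocalRing A]

theorem Function.Exact.free_iff_free_of_projective {H Q T : Type*} [AddCommGroup H] [Module A H]
    [AddCommGroup Q] [Module A Q] [AddCommGroup T] [Module A T] [Module.Projective A T]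
    [Module.Finite A H] [Module.Finite A Q] {i : H →ₗ[A] Q} {g : Q →ₗ[A] T}
    (h : Function.Exact i g) (hi : Function.Injective i) (hg : Function.Surjective g) :
    Module.Free A Q ↔ Module.Free A H := by
  obtain ⟨s, hs⟩ := Module.projective_lifting_property g LinearMap.id hg
  let e : Q ≃ₗ[A] H × T := (h.splitSurjectiveEquiv hi ⟨s, hs⟩).1
  constructor
  · intro
    have : Module.Projective A (H × T) := .of_equiv' e
    have : Module.Projective A H :=
      .of_split (LinearMap.inl A H T) (LinearMap.fst A H T) (LinearMap.fst_comp_inl A H T)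
    exact Module.free_of_flat_of_isLocalRing
  · intro
    have : Module.Projective A Q := .of_equiv' e.symm
    exact Module.free_of_flat_of_isLocalRing

theorem Submodule.free_quotient_iff_lTensor_residueField_injective {F : Type*} [AddCommGroup F]
    [Module A F] [Module.Free A F] [Module.Finite A F] (N : Submodule A F) [Module.Finite A N] :
    Module.Free A (F ⧸ N) ↔ Function.Injective (N.subtype.lTensor (ResidueField A)) := by
  have hexact := LinearMap.exact_subtype_mkQ N
  refine ⟨fun _ => ?_, Module.free_of_lTensor_residueField_injective _ _ N.mkQ_surjective hexact⟩
  have hsplit : (∃ s, N.mkQ ∘ₗ s = LinearMap.id) ↔ ∃ r, r ∘ₗ N.subtype = LinearMap.id :=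
    (hexact.split_tfae Subtype.val_injective N.mkQ_surjective).out 0 1
  rw [← IsLocalRing.split_injective_iff_lTensor_residueField_injective, ← hsplit]
  exact Module.projective_lifting_property N.mkQ LinearMap.id N.mkQ_surjective

end LocalRing

theorem stmt7_general {A : Type*} [CommRing A] [IsLocalRing A] [IsNoetherianRing A]
    {F0 : Type*} [AddCommGroup F0] [Module A F0]
    {F1 : Type*} [AddCommGroup F1] [Module A F1]
    {F2 : Type*} [AddCommGroup F2] [Module A F2] [Module.Free A F2] [Module.Finite A F2]
    {F3 : Type*} [AddCommGroup F3] [Module A F3] [Module.Free A F3] [Module.Finite A F3]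
    (d0 : F0 →ₗ[A] F1) (d1 : F1 →ₗ[A] F2) (d2 : F2 →ₗ[A] F3)
    (hc01 : d1 ∘ₗ d0 = 0) (hc12 : d2 ∘ₗ d1 = 0)
    (hsurj : Function.Surjective (cohBaseChange A (ResidueField A) d1 d2)) :
    Function.Surjective (cohBaseChange A (ResidueField A) d0 d1) ↔
      Module.Free A (coh A d1 d2) := by
  have : Module.Projective A (LinearMap.range d2) := by
    obtain ⟨r, hr⟩ := (IsLocalRing.split_injective_iff_lTensor_residueField_injective _).mpr
      ((cohBaseChange_surjective_iff_lTensor_range_injective _ d1 d2 hc12).mp hsurj)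
    exact .of_split _ r hr
  rw [cohBaseChange_surjective_iff_lTensor_range_injective _ d0 d1 hc01,
    ← Submodule.free_quotient_iff_lTensor_residueField_injective,
    (exact_cohToCoker_cokerToRange d1 d2 hc12).free_iff_free_of_projective
      (cohToCoker_injective d1 d2) (cokerToRange_surjective d1 d2 hc12)]

theorem stmt7 {A : Type*} [CommRing A] [IsLocalRing A] [IsNoetherianRing A]
    {F0 : Type*} [AddCommGroup F0] [Module A F0] [Module.Free A F0] [Module.Finite A F0]
    {F1 : Type*} [AddCommGroup F1] [Module A F1] [Module.Free A F1] [Module.Finite A F1]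
    {F2 : Type*} [AddCommGroup F2] [Module A F2] [Module.Free A F2] [Module.Finite A F2]
    {F3 : Type*} [AddCommGroup F3] [Module A F3] [Module.Free A F3] [Module.Finite A F3]
    (d0 : F0 →ₗ[A] F1) (d1 : F1 →ₗ[A] F2) (d2 : F2 →ₗ[A] F3)
    (hc01 : d1 ∘ₗ d0 = 0) (hc12 : d2 ∘ₗ d1 = 0)
    (hsurj : Function.Surjective (cohBaseChange A (ResidueField A) d1 d2)) :
    Function.Surjective (cohBaseChange A (ResidueField A) d0 d1) ↔
      Module.Free A (coh A d1 d2) :=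
  stmt7_general d0 d1 d2 hc01 hc12 hsurj
end

section
/- Let $(A, \mathfrak{m}, k)$ be a noetherian local ring and $(F^\bullet, d^\bullet)$ a cochain complex of free $A$-modules of finite rank. If for some $p$ there exist bases of $F^p$ and $F^{p+1}$ in which $d^p$ has matrix $\begin{pmatrix} 0 & \mathrm{Id} \\ 0 & 0 \end{pmatrix}$, then the base change map $\varphi^p \colon H^p(F^\bullet) \otimes_A k \to H^p(F^\bullet \otimes_A k)$ is an isomorphism. -/
open TensorProduct IsLocalRing

open TensorProduct

/-! The matrix of `d1` says that `d1` has a generalized inverse `π`, i.e. `d1 ∘ π ∘ d1 = d1`, and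
this identity survives every base change. Hence `x ↦ x - π (d1 x)` is a retraction of `F1` onto
`ker d1` compatible with base change, and the base change of `F1 → H(F)`, `x ↦ [x - π (d1 x)]`,
descends to an inverse of `φ`. -/

open LinearMap

section GeneralizedInverse

variable {R : Type*} [CommRing R] {M N : Type*} [AddCommGroup M] [AddCommGroup N]
  [Module R M] [Module R N] {d : M →ₗ[R] N} {π : N →ₗ[R] M}

def kerProj (h : d ∘ₗ π ∘ₗ d = d) : M →ₗ[R] ker d :=
  codRestrict (ker d) (LinearMap.id - π ∘ₗ d) fun x => by
    simpa [sub_eq_zero] using (congr($h x)).symm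

theorem kerProj_coe (h : d ∘ₗ π ∘ₗ d = d) (x : M) : (kerProj h x : M) = x - π (d x) := rfl

theorem kerProj_of_mem (h : d ∘ₗ π ∘ₗ d = d) (x : ker d) : kerProj h x = x :=
  Subtype.ext <| by simp [kerProj_coe, mem_ker.mp x.2]

theorem baseChange_comp_comp_eq (k : Type*) [CommRing k] [Algebra R k]
    (h : d ∘ₗ π ∘ₗ d = d) :
    d.baseChange k ∘ₗ π.baseChange k ∘ₗ d.baseChange k = d.baseChange k := by
  rw [← baseChange_comp, ← baseChange_comp, h]

end GeneralizedInverse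

section CohBaseChange

variable {A : Type*} [CommRing A] {k : Type*} [CommRing k] [Algebra A k]
  {M0 M1 M2 : Type*} [AddCommGroup M0] [AddCommGroup M1] [AddCommGroup M2]
  [Module A M0] [Module A M1] [Module A M2]
  {d0 : M0 →ₗ[A] M1} {d1 : M1 →ₗ[A] M2} {π : M2 →ₗ[A] M1}

theorem cohBaseChange_tmul_mk (c : k) (x : ker d1) :
    cohBaseChange A k d0 d1 (c ⊗ₜ Submodule.Quotient.mk x) =
      c • Submodule.Quotient.mk (kerBaseChange A k d1 x) := rfl

theorem kerBaseChange_coe (x : ker d1) :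
    (kerBaseChange A k d1 x : k ⊗[A] M1) = (1 : k) ⊗ₜ (x : M1) := rfl

variable (d0) in
def cohProj (h : d1 ∘ₗ π ∘ₗ d1 = d1) : M1 →ₗ[A] coh A d0 d1 :=
  Submodule.mkQ _ ∘ₗ kerProj h

theorem cohProj_comp (hc : d1 ∘ₗ d0 = 0) (h : d1 ∘ₗ π ∘ₗ d1 = d1) :
    cohProj d0 h ∘ₗ d0 = 0 := by
  ext x
  refine (Submodule.Quotient.mk_eq_zero _).mpr ⟨x, ?_⟩
  simp [kerProj_coe, show d1 (d0 x) = 0 from congr($hc x)]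

theorem cohBaseChange_baseChange_cohProj (h : d1 ∘ₗ π ∘ₗ d1 = d1) (u : k ⊗[A] M1) :
    cohBaseChange A k d0 d1 ((cohProj d0 h).baseChange k u) =
      Submodule.Quotient.mk (kerProj (baseChange_comp_comp_eq k h) u) := by
  induction u using TensorProduct.induction_on with
  | zero => simp
  | tmul c x =>
    rw [baseChange_tmul, cohProj, comp_apply, Submodule.mkQ_apply, cohBaseChange_tmul_mk,
      ← Submodule.Quotient.mk_smul]
    congr 1
    ext
    rw [Submodule.coe_smul, kerBaseChange_coe, kerProj_coe, kerProj_coe, smul_tmul', smul_eq_mul,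
      mul_one, baseChange_tmul, baseChange_tmul, tmul_sub]
  | add u v hu hv => simp only [map_add, hu, hv, Submodule.Quotient.mk_add]

def cohBaseChangeInv (hc : d1 ∘ₗ d0 = 0) (h : d1 ∘ₗ π ∘ₗ d1 = d1) :
    coh k (d0.baseChange k) (d1.baseChange k) →ₗ[k] k ⊗[A] coh A d0 d1 :=
  Submodule.liftQ _ ((cohProj d0 h).baseChange k ∘ₗ (ker (d1.baseChange k)).subtype) <| by
    rintro _ ⟨w, hw⟩
    rw [mem_ker, comp_apply, ← hw, ← comp_apply (g := d0.baseChange k), ← baseChange_comp,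
      cohProj_comp hc h, baseChange_zero, LinearMap.zero_apply]

theorem cohBaseChange_bijective_of_comp_comp_eq (hc : d1 ∘ₗ d0 = 0) (h : d1 ∘ₗ π ∘ₗ d1 = d1) :
    Function.Bijective (cohBaseChange A k d0 d1) := by
  refine Function.bijective_iff_has_inverse.mpr ⟨cohBaseChangeInv hc h, fun z => ?_, fun w => ?_⟩
  · induction z using TensorProduct.induction_on with
    | zero => simp
    | tmul c m =>
      obtain ⟨x, rfl⟩ := Submodule.mkQ_surjective _ m
      rw [Submodule.mkQ_apply, cohBaseChange_tmul_mk, map_smul, cohBaseChangeInv,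
        Submodule.liftQ_apply, comp_apply, Submodule.subtype_apply, kerBaseChange_coe,
        baseChange_tmul, cohProj, comp_apply, kerProj_of_mem, smul_tmul', smul_eq_mul, mul_one,
        Submodule.mkQ_apply]
    | add u v hu hv => simp only [map_add, hu, hv]
  · obtain ⟨y, rfl⟩ := Submodule.mkQ_surjective _ w
    rw [Submodule.mkQ_apply, cohBaseChangeInv, Submodule.liftQ_apply, comp_apply,
      Submodule.subtype_apply, cohBaseChange_baseChange_cohProj, kerProj_of_mem]

end CohBaseChange

theorem exists_comp_comp_eq_of_toMatrix_eq_fromBlocks {R : Type*} [CommRing R]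
    {M N : Type*} [AddCommGroup M] [AddCommGroup N] [Module R M] [Module R N]
    {ι κ μ : Type*} [Fintype ι] [Fintype κ] [Fintype μ] [DecidableEq ι] [DecidableEq κ]
    [DecidableEq μ] (b : Module.Basis (ι ⊕ κ) R M) (b' : Module.Basis (κ ⊕ μ) R N)
    {d : M →ₗ[R] N} (hd : toMatrix b b' d = Matrix.fromBlocks 0 1 0 0) :
    ∃ π : N →ₗ[R] M, d ∘ₗ π ∘ₗ d = d := by
  refine ⟨Matrix.toLin b' b (Matrix.fromBlocks 0 0 1 0), (toMatrix b b').injective ?_⟩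
  rw [LinearMap.toMatrix_comp b b b', LinearMap.toMatrix_comp b b' b, toMatrix_toLin, hd]
  simp [Matrix.fromBlocks_multiply]

theorem stmt13_general {A : Type*} [CommRing A] [IsLocalRing A]
    {F0 : Type*} [AddCommGroup F0] [Module A F0]
    {F1 : Type*} [AddCommGroup F1] [Module A F1]
    {F2 : Type*} [AddCommGroup F2] [Module A F2]
    (d0 : F0 →ₗ[A] F1) (d1 : F1 →ₗ[A] F2) (hc : d1 ∘ₗ d0 = 0)
    (hmat : ∃ (r s t : ℕ) (b : Module.Basis (Fin r ⊕ Fin s) A F1)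
      (b' : Module.Basis (Fin s ⊕ Fin t) A F2),
      LinearMap.toMatrix b b' d1 =
        Matrix.fromBlocks (0 : Matrix (Fin s) (Fin r) A) 1 0 0) :
    Function.Bijective (cohBaseChange A (ResidueField A) d0 d1) := by
  obtain ⟨r, s, t, b, b', hd⟩ := hmat
  obtain ⟨π, hπ⟩ := exists_comp_comp_eq_of_toMatrix_eq_fromBlocks b b' hd
  exact cohBaseChange_bijective_of_comp_comp_eq hc hπ

theorem stmt13 {A : Type*} [CommRing A] [IsLocalRing A] [IsNoetherianRing A]
    {F0 : Type*} [AddCommGroup F0] [Module A F0] [Module.Free A F0] [Module.Finite A F0]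
    {F1 : Type*} [AddCommGroup F1] [Module A F1] [Module.Free A F1] [Module.Finite A F1]
    {F2 : Type*} [AddCommGroup F2] [Module A F2] [Module.Free A F2] [Module.Finite A F2]
    (d0 : F0 →ₗ[A] F1) (d1 : F1 →ₗ[A] F2) (hc : d1 ∘ₗ d0 = 0)
    (hmat : ∃ (r s t : ℕ) (b : Module.Basis (Fin r ⊕ Fin s) A F1)
      (b' : Module.Basis (Fin s ⊕ Fin t) A F2),
      LinearMap.toMatrix b b' d1 =
        Matrix.fromBlocks (0 : Matrix (Fin s) (Fin r) A) 1 0 0) :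
    Function.Bijective (cohBaseChange A (ResidueField A) d0 d1) :=
  stmt13_general d0 d1 hc hmat
end

section
/- Let $(A, \mathfrak{m}, k)$ be a noetherian local ring and $(F^\bullet, d^\bullet)$ a cochain complex of free $A$-modules of finite rank, indexed in nonnegative degrees (so $F^q = 0$ for $q < 0$). Suppose $H^1(F^\bullet \otimes_A k) = 0$. Then $H^0(F^\bullet) = \ker d^0$ is a free $A$-module, and for every $A$-algebra $B$, the natural map $H^0(F^\bullet) \otimes_A B \to H^0(F^\bullet \otimes_A B)$ is an isomorphism. -/
open TensorProduct IsLocalRing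

open TensorProduct

theorem stmt17 {A : Type*} [CommRing A] [IsLocalRing A] [IsNoetherianRing A]
    {F0 : Type*} [AddCommGroup F0] [Module A F0] [Module.Free A F0] [Module.Finite A F0]
    {F1 : Type*} [AddCommGroup F1] [Module A F1] [Module.Free A F1] [Module.Finite A F1]
    {F2 : Type*} [AddCommGroup F2] [Module A F2] [Module.Free A F2] [Module.Finite A F2]
    (d0 : F0 →ₗ[A] F1) (d1 : F1 →ₗ[A] F2) (hc : d1 ∘ₗ d0 = 0)
    (hvanish : Subsingleton
      (coh (ResidueField A) (d0.baseChange (ResidueField A))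
        (d1.baseChange (ResidueField A)))) :
    Module.Free A (LinearMap.ker d0) ∧
    ∀ (B : Type*) [CommRing B] [Algebra A B],
      Function.Bijective (LinearMap.liftBaseChange B (kerBaseChange A B d0)) := by
    classical
  set kk := ResidueField A with hkk
  -- the cokernel of d0 and the induced map to F2
  set C := F1 ⧸ LinearMap.range d0 with hC
  set δ : C →ₗ[A] F2 := Submodule.liftQ _ d1 (LinearMap.range_le_ker_iff.mpr hc) with hδdef
  have hmkQd0 : (LinearMap.range d0).mkQ ∘ₗ d0 = 0 := by
    ext x
    simp [Submodule.Quotient.mk_eq_zero]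
  -- injectivity of δ ⊗ k
  have hδ : Function.Injective (δ.lTensor kk) := by
    rw [injective_iff_map_eq_zero]
    intro z hz
    obtain ⟨w, rfl⟩ := LinearMap.lTensor_surjective kk
      (Submodule.mkQ_surjective (LinearMap.range d0)) z
    rw [← LinearMap.comp_apply, ← LinearMap.lTensor_comp, Submodule.liftQ_mkQ] at hz
    have hw : w ∈ LinearMap.ker (d1.baseChange kk) := by
      rw [LinearMap.mem_ker]
      have : (d1.baseChange kk : kk ⊗[A] F1 → kk ⊗[A] F2) = d1.lTensor kk :=
        LinearMap.baseChange_eq_ltensor d1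
      rw [show (d1.baseChange kk) w = (d1.lTensor kk) w from congrFun this w]
      exact hz
    have h0 : (Submodule.Quotient.mk (⟨w, hw⟩ : LinearMap.ker (d1.baseChange kk)) :
        coh kk (d0.baseChange kk) (d1.baseChange kk)) = 0 := Subsingleton.elim _ _
    rw [Submodule.Quotient.mk_eq_zero] at h0
    obtain ⟨x, hx⟩ := h0
    have hx' : (d0.lTensor kk) x = w := by
      have : (d0.baseChange kk : kk ⊗[A] F0 → kk ⊗[A] F1) = d0.lTensor kk :=
        LinearMap.baseChange_eq_ltensor d0
      rw [← congrFun this x]; exact hx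
    rw [← hx', ← LinearMap.comp_apply, ← LinearMap.lTensor_comp, hmkQd0,
      LinearMap.lTensor_zero, LinearMap.zero_apply]
  -- δ is split injective, hence C is projective
  obtain ⟨ρ, hρ⟩ := (IsLocalRing.split_injective_iff_lTensor_residueField_injective δ).mpr hδ
  have hCproj : Module.Projective A C := Module.Projective.of_split δ ρ hρ
  -- split the quotient map F1 → C
  obtain ⟨s, hs⟩ := Module.projective_lifting_property (LinearMap.range d0).mkQ
    (LinearMap.id (R := A) (M := C)) (Submodule.mkQ_surjective _)
  -- projection F1 → range d0
  set π : F1 →ₗ[A] F1 := LinearMap.id - s ∘ₗ (LinearMap.range d0).mkQ with hπ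
  have hπmem : ∀ x, π x ∈ LinearMap.range d0 := by
    intro x
    have : (LinearMap.range d0).mkQ (π x) = 0 := by
      simp only [hπ, LinearMap.sub_apply, LinearMap.id_apply, LinearMap.comp_apply, map_sub]
      rw [← LinearMap.comp_apply (LinearMap.range d0).mkQ s, hs]
      rw [LinearMap.id_apply, Submodule.mkQ_apply, sub_self]
    rwa [Submodule.mkQ_apply, Submodule.Quotient.mk_eq_zero] at this
  set τ : F1 →ₗ[A] LinearMap.range d0 := LinearMap.codRestrict _ π hπmem with hτdef
  have hτ : τ ∘ₗ (LinearMap.range d0).subtype = LinearMap.id := by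
    ext y
    simp only [hτdef, LinearMap.comp_apply, LinearMap.codRestrict_apply,
      Submodule.subtype_apply, LinearMap.id_apply, hπ, LinearMap.sub_apply,
      LinearMap.id_apply]
    have h0 : (LinearMap.range d0).mkQ (y : F1) = 0 := by
      rw [Submodule.mkQ_apply, Submodule.Quotient.mk_eq_zero]; exact y.2
    rw [h0, map_zero, sub_zero]
  have hRproj : Module.Projective A (LinearMap.range d0) :=
    Module.Projective.of_split (LinearMap.range d0).subtype τ hτ
  -- split d0 : F0 → range d0
  obtain ⟨σ, hσ⟩ := Module.projective_lifting_property d0.rangeRestrict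
    (LinearMap.id (R := A) (M := LinearMap.range d0)) d0.surjective_rangeRestrict
  -- projection F0 → ker d0
  set e : F0 →ₗ[A] F0 := LinearMap.id - σ ∘ₗ d0.rangeRestrict with he
  have hd0σ : ∀ z : LinearMap.range d0, d0 (σ z) = (z : F1) := by
    intro z
    have : d0.rangeRestrict (σ z) = z := by
      rw [← LinearMap.comp_apply, hσ, LinearMap.id_apply]
    exact congrArg Subtype.val this
  have hemem : ∀ x, e x ∈ LinearMap.ker d0 := by
    intro x
    rw [LinearMap.mem_ker]
    simp only [he, LinearMap.sub_apply, LinearMap.id_apply, LinearMap.comp_apply, map_sub]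
    rw [hd0σ]
    simp [LinearMap.rangeRestrict]
  set q : F0 →ₗ[A] LinearMap.ker d0 := LinearMap.codRestrict _ e hemem with hqdef
  set j : LinearMap.ker d0 →ₗ[A] F0 := (LinearMap.ker d0).subtype with hjdef
  have hqj : q ∘ₗ j = LinearMap.id := by
    ext x
    simp only [hqdef, LinearMap.comp_apply, LinearMap.codRestrict_apply, hjdef,
      Submodule.subtype_apply, LinearMap.id_apply, he, LinearMap.sub_apply,
      LinearMap.id_apply]
    have h0 : d0.rangeRestrict (x : F0) = 0 := by
      apply Subtype.ext
      simpa [LinearMap.rangeRestrict] using x.2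
    rw [h0, map_zero, sub_zero]
  have hjq : j ∘ₗ q = e := LinearMap.subtype_comp_codRestrict _ _ hemem
  have hiota : (LinearMap.range d0).subtype ∘ₗ d0.rangeRestrict = d0 :=
    LinearMap.subtype_comp_codRestrict _ _ _
  -- freeness of ker d0
  have hKproj : Module.Projective A (LinearMap.ker d0) :=
    Module.Projective.of_split j q hqj
  have hKfin : Module.Finite A (LinearMap.ker d0) :=
    Module.Finite.iff_fg.mpr (IsNoetherian.noetherian _)
  have hKfp : Module.FinitePresentation A (LinearMap.ker d0) :=
    Module.finitePresentation_of_projective A _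
  have hKfree : Module.Free A (LinearMap.ker d0) :=
    Module.free_of_flat_of_isLocalRing
  refine ⟨hKfree, ?_⟩
  intro B _ _
  set f := LinearMap.liftBaseChange B (kerBaseChange A B d0) with hf
  have hsub : ∀ z : B ⊗[A] LinearMap.ker d0, ((f z : B ⊗[A] F0)) = j.baseChange B z := by
    intro z
    induction z using TensorProduct.induction_on with
    | zero => simp
    | tmul b x =>
      show (((b : B) • kerBaseChange A B d0 x : LinearMap.ker (d0.baseChange B)) : B ⊗[A] F0) = _
      rw [Submodule.coe_smul]
      show b • ((1 : B) ⊗ₜ[A] (x : F0)) = b ⊗ₜ[A] (x : F0)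
      rw [TensorProduct.smul_tmul', smul_eq_mul, mul_one]
    | add x y hx hy => rw [map_add, Submodule.coe_add, hx, hy, map_add]
  -- injectivity of ι ⊗ B
  have hιinj : Function.Injective ((LinearMap.range d0).subtype.baseChange B) := by
    have : τ.baseChange B ∘ₗ (LinearMap.range d0).subtype.baseChange B = LinearMap.id := by
      rw [← LinearMap.baseChange_comp, hτ, LinearMap.baseChange_id]
    exact Function.HasLeftInverse.injective ⟨τ.baseChange B, fun x => by
      simpa using congrArg (fun g => g x) (congrArg DFunLike.coe this)⟩
  constructor
  · intro x y hxy
    have h1 : j.baseChange B x = j.baseChange B y := by rw [← hsub, ← hsub, hxy]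
    have h2 := congrArg (q.baseChange B) h1
    rwa [← LinearMap.comp_apply, ← LinearMap.comp_apply, ← LinearMap.baseChange_comp,
      hqj, LinearMap.baseChange_id, LinearMap.id_apply, LinearMap.id_apply] at h2
  · intro y
    refine ⟨q.baseChange B (y : B ⊗[A] F0), ?_⟩
    apply Subtype.ext
    rw [hsub, ← LinearMap.comp_apply, ← LinearMap.baseChange_comp, hjq]
    have hy0 : d0.rangeRestrict.baseChange B (y : B ⊗[A] F0) = 0 := by
      apply hιinj
      rw [map_zero, ← LinearMap.comp_apply, ← LinearMap.baseChange_comp, hiota]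
      exact y.2
    rw [he, LinearMap.baseChange_sub, LinearMap.baseChange_id, LinearMap.sub_apply,
      LinearMap.id_apply, LinearMap.baseChange_comp, LinearMap.comp_apply, hy0,
      map_zero, sub_zero]
end
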